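/- For the type B metric on ℝ⁴ with μ = 0, i.e., g = e^{-y}(2dx+dy)dv + e^{-x}(dx+2dy)du, there is no smooth vector field X on ℝ⁴ and no real number λ such that L_X g + ρ = λ g. Hence this metric is not a Ricci soliton. -/

import Mathlib

open Real

noncomputable def pd {n : ℕ} (i : Fin n) (f : (Fin n → ℝ) → ℝ) (p : Fin n → ℝ) : ℝ :=
  fderiv ℝ f p (Pi.single i 1)

/-- The type B metric with μ = 0: g = e^{-y}(2dx+dy)dv + e^{-x}(dx+2dy)du. -/
noncomputable def gB0 (p : Fin 4 → ℝ) : Matrix (Fin 4) (Fin 4) ℝ :=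
  Matrix.of
    ![![0, 0, exp (-p 0) / 2, exp (-p 1)],
      ![0, 0, exp (-p 0), exp (-p 1) / 2],
      ![exp (-p 0) / 2, exp (-p 0), 0, 0],
      ![exp (-p 1), exp (-p 1) / 2, 0, 0]]

noncomputable def ρB : Matrix (Fin 4) (Fin 4) ℝ :=
  Matrix.of
    ![![-4/3, -2/3, 0, 0], ![-2/3, -4/3, 0, 0], ![0, 0, 0, 0], ![0, 0, 0, 0]]

noncomputable def lieD {n : ℕ} (g : (Fin n → ℝ) → Matrix (Fin n) (Fin n) ℝ)
    (X : Fin n → (Fin n → ℝ) → ℝ) (i j : Fin n) (p : Fin n → ℝ) : ℝ :=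
  (∑ k, X k p * pd k (fun q => g q i j) p)
    + (∑ k, g p k j * pd i (X k) p) + (∑ k, g p i k * pd j (X k) p)

section Aux

lemma pd_const (i : Fin 4) (p : Fin 4 → ℝ) (c : ℝ) :
    pd i (fun _ : Fin 4 → ℝ => c) p = 0 := by
  simp [pd]

lemma contDiff_pd {f : (Fin 4 → ℝ) → ℝ} (hf : ContDiff ℝ (⊤ : ℕ∞) f) (i : Fin 4) :
    ContDiff ℝ (⊤ : ℕ∞) (pd i f) := by
  have h1 : ContDiff ℝ (⊤ : ℕ∞) (fderiv ℝ f) := hf.fderiv_right (by simp)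
  exact (ContinuousLinearMap.apply ℝ ℝ (Pi.single i (1:ℝ))).contDiff.comp h1

lemma pd_comm {f : (Fin 4 → ℝ) → ℝ} (hf : ContDiff ℝ (⊤ : ℕ∞) f) (i j : Fin 4) (p : Fin 4 → ℝ) :
    pd i (pd j f) p = pd j (pd i f) p := by
  have hd : ContDiff ℝ (⊤ : ℕ∞) (fderiv ℝ f) := hf.fderiv_right (by simp)
  have hda : DifferentiableAt ℝ (fderiv ℝ f) p := (hd.differentiable (by simp)).differentiableAt
  have key : ∀ a b : Fin 4,
      pd a (pd b f) p = fderiv ℝ (fderiv ℝ f) p (Pi.single a 1) (Pi.single b 1) := by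
    intro a b
    show fderiv ℝ (fun q => (fderiv ℝ f q) (Pi.single b (1:ℝ))) p (Pi.single a 1) = _
    rw [fderiv_clm_apply hda (differentiableAt_const _)]
    simp
  rw [key i j, key j i]
  exact (hf.contDiffAt.isSymmSndFDerivAt (by rw [minSmoothness_of_isRCLikeNormedField]; exact WithTop.coe_le_coe.mpr le_top)) _ _

lemma pd_lin3 {f g h : (Fin 4 → ℝ) → ℝ} (hf : ContDiff ℝ (⊤ : ℕ∞) f) (hg : ContDiff ℝ (⊤ : ℕ∞) g)
    (hh : ContDiff ℝ (⊤ : ℕ∞) h) (a b c d : ℝ)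
    (H : ∀ q, a * f q + b * g q + c * h q = d) (i : Fin 4) (p : Fin 4 → ℝ) :
    a * pd i f p + b * pd i g p + c * pd i h p = 0 := by
  have Hf := (hf.differentiable (by simp) p).hasFDerivAt
  have Hg := (hg.differentiable (by simp) p).hasFDerivAt
  have Hh := (hh.differentiable (by simp) p).hasFDerivAt
  have comb : HasFDerivAt (fun q => a * f q + b * g q + c * h q)
      (a • fderiv ℝ f p + b • fderiv ℝ g p + c • fderiv ℝ h p) p :=
    ((Hf.const_mul a).add (Hg.const_mul b)).add (Hh.const_mul c)
  rw [funext H] at comb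
  have h0 : (a • fderiv ℝ f p + b • fderiv ℝ g p + c • fderiv ℝ h p)
      = (0 : (Fin 4 → ℝ) →L[ℝ] ℝ) := (hasFDerivAt_const d p).unique comb |>.symm ▸ rfl
  have h1 := congrArg (fun (L : (Fin 4 → ℝ) →L[ℝ] ℝ) => L (Pi.single i 1)) h0
  simpa [pd, smul_eq_mul] using h1

lemma pd_lin2 {f g : (Fin 4 → ℝ) → ℝ} (hf : ContDiff ℝ (⊤ : ℕ∞) f) (hg : ContDiff ℝ (⊤ : ℕ∞) g)
    (a b d : ℝ) (H : ∀ q, a * f q + b * g q = d) (i : Fin 4) (p : Fin 4 → ℝ) :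
    a * pd i f p + b * pd i g p = 0 := by
  have := pd_lin3 (h := fun _ => (0:ℝ)) hf hg contDiff_const a b 0 d
    (fun q => by simpa using H q) i p
  simpa using this

lemma pd_exp_mul {f : (Fin 4 → ℝ) → ℝ} (hf : ContDiff ℝ (⊤ : ℕ∞) f) (i k : Fin 4) (p : Fin 4 → ℝ) :
    pd k (fun q => exp (-q i) * f q) p
      = (if i = k then -(exp (-p i) * f p) else 0) + exp (-p i) * pd k f p := by
  have hproj : HasFDerivAt (fun q : Fin 4 → ℝ => q i)
      ((ContinuousLinearMap.proj i : (Fin 4 → ℝ) →L[ℝ] ℝ)) p :=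
    ContinuousLinearMap.hasFDerivAt (ContinuousLinearMap.proj (R := ℝ) (φ := fun _ : Fin 4 => ℝ) i)
  have hexp : HasFDerivAt (fun q : Fin 4 → ℝ => exp (-q i))
      (exp (-p i) • (-(ContinuousLinearMap.proj i : (Fin 4 → ℝ) →L[ℝ] ℝ))) p := hproj.neg.exp
  have hmul : HasFDerivAt (fun q => exp (-q i) * f q) _ p := hexp.mul (hf.differentiable (by simp) p).hasFDerivAt
  show fderiv ℝ (fun q => exp (-q i) * f q) p (Pi.single k 1) = _
  rw [hmul.fderiv]
  simp only [ContinuousLinearMap.add_apply, ContinuousLinearMap.smul_apply,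
    ContinuousLinearMap.neg_apply, ContinuousLinearMap.proj_apply, smul_eq_mul, Pi.single_apply]
  by_cases hik : i = k
  · simp [hik, pd]; ring
  · simp [hik, Ne.symm hik, pd]

lemma contDiff_exp_neg_coord (i : Fin 4) : ContDiff ℝ (⊤ : ℕ∞) (fun q : Fin 4 → ℝ => exp (-q i)) := by
  have h1 : ContDiff ℝ (⊤ : ℕ∞) (fun q : Fin 4 → ℝ => -q i) :=
    ((ContinuousLinearMap.proj i : (Fin 4 → ℝ) →L[ℝ] ℝ).contDiff).neg
  exact Real.contDiff_exp.comp h1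

end Aux

/-- The type B metric with μ = 0 is not a Ricci soliton: there is no smooth
vector field X and no λ ∈ ℝ with L_X g + ρ = λ g. -/
theorem no_soliton_typeB_mu_zero :
    ¬ ∃ (X : Fin 4 → (Fin 4 → ℝ) → ℝ) (lam : ℝ),
      (∀ k, ContDiff ℝ (⊤ : ℕ∞) (X k)) ∧
      ∀ p : Fin 4 → ℝ, ∀ i j : Fin 4,
        lieD gB0 X i j p + ρB i j = lam * gB0 p i j := by
  rintro ⟨X, lam, hX, h⟩
  have hC : ContDiff ℝ (⊤ : ℕ∞) (X 2) := hX 2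
  have hD : ContDiff ℝ (⊤ : ℕ∞) (X 3) := hX 3
  -- raw soliton equations for components (0,0), (1,1), (0,1)
  have E1 : ∀ p : Fin 4 → ℝ,
      exp (-p 0) * pd 0 (X 2) p + 2 * (exp (-p 1) * pd 0 (X 3) p) = 4/3 := by
    intro p
    have e := h p 0 0
    simp only [lieD, Fin.sum_univ_four] at e
    rw [show (fun q : Fin 4 → ℝ => gB0 q 0 0) = (fun _ => (0:ℝ)) from rfl] at e
    simp only [pd_const] at e
    rw [show gB0 p 0 0 = 0 from rfl, show gB0 p 1 0 = 0 from rfl,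
      show gB0 p 2 0 = exp (-p 0) / 2 from rfl, show gB0 p 3 0 = exp (-p 1) from rfl,
      show gB0 p 0 1 = 0 from rfl, show gB0 p 0 2 = exp (-p 0) / 2 from rfl,
      show gB0 p 0 3 = exp (-p 1) from rfl, show ρB 0 0 = -4/3 from rfl] at e
    ring_nf at e ⊢
    linarith
  have E2 : ∀ p : Fin 4 → ℝ,
      2 * (exp (-p 0) * pd 1 (X 2) p) + exp (-p 1) * pd 1 (X 3) p = 4/3 := by
    intro p
    have e := h p 1 1
    simp only [lieD, Fin.sum_univ_four] at e
    rw [show (fun q : Fin 4 → ℝ => gB0 q 1 1) = (fun _ => (0:ℝ)) from rfl] at e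
    simp only [pd_const] at e
    rw [show gB0 p 0 1 = 0 from rfl, show gB0 p 1 1 = 0 from rfl,
      show gB0 p 2 1 = exp (-p 0) from rfl, show gB0 p 3 1 = exp (-p 1) / 2 from rfl,
      show gB0 p 1 0 = 0 from rfl, show gB0 p 1 2 = exp (-p 0) from rfl,
      show gB0 p 1 3 = exp (-p 1) / 2 from rfl, show ρB 1 1 = -4/3 from rfl] at e
    ring_nf at e ⊢
    linarith
  have E3 : ∀ p : Fin 4 → ℝ,
      exp (-p 0) * pd 0 (X 2) p + exp (-p 1) / 2 * pd 0 (X 3) p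
        + exp (-p 0) / 2 * pd 1 (X 2) p + exp (-p 1) * pd 1 (X 3) p = 2/3 := by
    intro p
    have e := h p 0 1
    simp only [lieD, Fin.sum_univ_four] at e
    rw [show (fun q : Fin 4 → ℝ => gB0 q 0 1) = (fun _ => (0:ℝ)) from rfl] at e
    simp only [pd_const] at e
    rw [show gB0 p 0 1 = 0 from rfl, show gB0 p 1 1 = 0 from rfl,
      show gB0 p 2 1 = exp (-p 0) from rfl, show gB0 p 3 1 = exp (-p 1) / 2 from rfl,
      show gB0 p 0 0 = 0 from rfl, show gB0 p 0 2 = exp (-p 0) / 2 from rfl,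
      show gB0 p 0 3 = exp (-p 1) from rfl, show ρB 0 1 = -2/3 from rfl] at e
    ring_nf at e ⊢
    linarith
  -- the rescaled functions P = e^{-x} X², Q = e^{-y} X³
  set P : (Fin 4 → ℝ) → ℝ := fun q => exp (-q 0) * X 2 q with hPdef
  set Q : (Fin 4 → ℝ) → ℝ := fun q => exp (-q 1) * X 3 q with hQdef
  have hP : ContDiff ℝ (⊤ : ℕ∞) P := (contDiff_exp_neg_coord 0).mul hC
  have hQ : ContDiff ℝ (⊤ : ℕ∞) Q := (contDiff_exp_neg_coord 1).mul hD
  have pdP0 : ∀ p, pd 0 P p = -(P p) + exp (-p 0) * pd 0 (X 2) p := by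
    intro p; rw [hPdef]; rw [pd_exp_mul hC 0 0 p]; simp
  have pdP1 : ∀ p, pd 1 P p = exp (-p 0) * pd 1 (X 2) p := by
    intro p; rw [hPdef]; rw [pd_exp_mul hC 0 1 p]; simp
  have pdQ0 : ∀ p, pd 0 Q p = exp (-p 1) * pd 0 (X 3) p := by
    intro p; rw [hQdef]; rw [pd_exp_mul hD 1 0 p]; simp
  have pdQ1 : ∀ p, pd 1 Q p = -(Q p) + exp (-p 1) * pd 1 (X 3) p := by
    intro p; rw [hQdef]; rw [pd_exp_mul hD 1 1 p]; simp
  -- the three basic PDEs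
  have h1 : ∀ p, pd 0 P p + P p + 2 * pd 0 Q p = 4/3 := by
    intro p; rw [pdP0 p, pdQ0 p]; have := E1 p; ring_nf; ring_nf at this; linarith
  have h2 : ∀ p, 2 * pd 1 P p + pd 1 Q p + Q p = 4/3 := by
    intro p; rw [pdP1 p, pdQ1 p]; have := E2 p; ring_nf; ring_nf at this; linarith
  have h3raw : ∀ p, (pd 0 P p + P p) + (1/2) * pd 0 Q p + (1/2) * pd 1 P p
      + (pd 1 Q p + Q p) = 2/3 := by
    intro p; rw [pdP0 p, pdQ0 p, pdP1 p, pdQ1 p]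
    have := E3 p; ring_nf; ring_nf at this; linarith
  have h3 : ∀ p, pd 0 Q p + pd 1 P p = 4/3 := by
    intro p; have a := h1 p; have b := h2 p; have c := h3raw p; linarith
  have hstar : ∀ p, pd 0 P p + P p - 2 * pd 1 P p = -(4/3) := by
    intro p; have a := h1 p; have c := h3 p; linarith
  -- smoothness of derived functions
  have hP0 := contDiff_pd hP 0
  have hP1 := contDiff_pd hP 1
  have hQ0 := contDiff_pd hQ 0
  have hQ1 := contDiff_pd hQ 1
  have hP11 := contDiff_pd hP1 1
  have hP01 := contDiff_pd hP1 0
  -- D1 : ∂₁ of h3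
  have D1 : ∀ p, pd 1 (pd 0 Q) p + pd 1 (pd 1 P) p = 0 := by
    intro p
    have := pd_lin2 hQ0 hP1 1 1 (4/3) (fun q => by have := h3 q; linarith) 1 p
    linarith
  -- D2 : ∂₀ of h2
  have D2 : ∀ p, 2 * pd 0 (pd 1 P) p + pd 0 (pd 1 Q) p + pd 0 Q p = 0 := by
    intro p
    have := pd_lin3 hP1 hQ1 hQ 2 1 1 (4/3) (fun q => by have := h2 q; linarith) 0 p
    linarith
  have star2 : ∀ p, 2 * pd 0 (pd 1 P) p - pd 1 (pd 1 P) p - pd 1 P p + 4/3 = 0 := by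
    intro p
    have c1 := pd_comm hQ 0 1 p
    have := D2 p
    rw [c1] at this
    have d1 := D1 p
    have t3 := h3 p
    linarith
  -- D3 : ∂₁ of hstar
  have s3 : ∀ p, pd 0 (pd 1 P) p - 2 * pd 1 (pd 1 P) p + pd 1 P p = 0 := by
    intro p
    have := pd_lin3 hP0 hP hP1 1 1 (-2) (-(4/3))
      (fun q => by have := hstar q; linarith) 1 p
    have c1 := pd_comm hP 1 0 p
    rw [c1] at this
    linarith
  have dag : ∀ p, 3 * pd 1 (pd 1 P) p - 3 * pd 1 P p + 4/3 = 0 := by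
    intro p; have a := star2 p; have b := s3 p; linarith
  -- D4 : ∂₁ of s3
  have D4 : ∀ p, pd 1 (pd 0 (pd 1 P)) p - 2 * pd 1 (pd 1 (pd 1 P)) p
      + pd 1 (pd 1 P) p = 0 := by
    intro p
    have := pd_lin3 hP01 hP11 hP1 1 (-2) 1 0 (fun q => by have := s3 q; linarith) 1 p
    linarith
  -- D5 : ∂₁ of dag
  have D5 : ∀ p, 3 * pd 1 (pd 1 (pd 1 P)) p - 3 * pd 1 (pd 1 P) p = 0 := by
    intro p
    have := pd_lin2 hP11 hP1 3 (-3) (-(4/3)) (fun q => by have := dag q; linarith) 1 p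
    linarith
  -- D6 : ∂₀ of dag
  have D6 : ∀ p, 3 * pd 0 (pd 1 (pd 1 P)) p - 3 * pd 0 (pd 1 P) p = 0 := by
    intro p
    have := pd_lin2 hP11 hP1 3 (-3) (-(4/3)) (fun q => by have := dag q; linarith) 0 p
    linarith
  -- final contradiction at the origin
  have p0 : Fin 4 → ℝ := fun _ => 0
  have c2 := pd_comm hP1 1 0 p0
  have a1 := D4 p0
  have a2 := D5 p0
  have a3 := D6 p0
  have a4 := s3 p0
  have a5 := dag p0
  rw [c2] at a1
  linarith
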